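/- arXiv:math/0202150 — 3 statements merged into one kernel-verified Lean document; each statement's English description precedes it below -/
import Mathlib

section
/- Let Λ be a lattice with involution θ, σ(λ) = λ + θ(λ), and let Δ ⊂ Λ be a finite linearly independent set permuted by θ. Then the semigroup Λ^θ ∩ Q^pos, where Q^pos is the sub-semigroup generated by Δ, is generated by the elements α ∈ Λ^θ ∩ Δ together with the elements σ(α) for α ∈ Δ. -/
/-!
Write a θ-fixed element of `Q^pos` as the sum of a nonempty multiset `m` of elements of `Δ`.
Since `θ` permutes `Δ` and `Δ` is linearly independent, `θ m = m`. A θ-stable multiset splits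
into θ-fixed elements and pairs `{α, θ α}`, and a pair contributes `σ α` to the sum.
-/

open Function

namespace Multiset

variable {ι : Type*}

theorem exists_eq_add_add_map_of_map_eq {e : ι → ι} (he : Involutive e) (m : Multiset ι)
    (hm : m.map e = m) : ∃ p q : Multiset ι, (∀ i ∈ p, e i = i) ∧ m = p + q + q.map e := by
  classical
  induction m using Multiset.strongInductionOn with
  | ih m ih =>
  rcases m.empty_or_exists_mem with rfl | ⟨i, hi⟩
  · exact ⟨0, 0, by simp, by simp⟩
  by_cases hfix : e i = i
  · have hm' : (m.erase i).map e = m.erase i := by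
      rw [map_erase e he.injective, hm, hfix]
    obtain ⟨p, q, hp, hpq⟩ := ih _ (erase_lt.mpr hi) hm'
    refine ⟨i ::ₘ p, q, by simpa [hfix] using hp, ?_⟩
    rw [← cons_erase hi, hpq, cons_add, cons_add]
  · have hei : e i ∈ m.erase i := (mem_erase_of_ne hfix).mpr (hm ▸ mem_map_of_mem e hi)
    have hm' : ((m.erase i).erase (e i)).map e = (m.erase i).erase (e i) := by
      rw [map_erase e he.injective, map_erase e he.injective, hm, he i, erase_comm]
    obtain ⟨p, q, hp, hpq⟩ :=
      ih _ ((erase_lt.mpr hei).trans (erase_lt.mpr hi)) hm'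
    refine ⟨p, i ::ₘ q, hp, ?_⟩
    rw [← cons_erase hi, ← cons_erase hei, hpq, map_cons]
    simp only [add_cons, cons_add]
    rw [cons_swap]

end Multiset

namespace AddSubsemigroup

variable {M ι : Type*} [AddCommMonoid M]

theorem multiset_sum_mem_closure {s : Set M} {m : Multiset M} (hm : m ≠ 0)
    (hs : ∀ a ∈ m, a ∈ s) : m.sum ∈ closure s := by
  induction m using Multiset.induction_on with
  | empty => exact absurd rfl hm
  | cons a m ih =>
    rw [Multiset.sum_cons]
    have ha : a ∈ closure s := subset_closure (hs a (Multiset.mem_cons_self a m))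
    rcases eq_or_ne m 0 with rfl | hm'
    · simpa using ha
    · exact add_mem ha (ih hm' fun b hb => hs b (Multiset.mem_cons_of_mem hb))

theorem exists_multiset_of_mem_closure_range {v : ι → M} {x : M}
    (hx : x ∈ closure (Set.range v)) : ∃ m : Multiset ι, m ≠ 0 ∧ (m.map v).sum = x := by
  induction hx using closure_induction with
  | mem _ h =>
    obtain ⟨i, rfl⟩ := h
    exact ⟨{i}, Multiset.singleton_ne_zero i, by simp⟩
  | add _ _ _ _ hx hy =>
    obtain ⟨m, hm, rfl⟩ := hx
    obtain ⟨n, -, rfl⟩ := hy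
    exact ⟨m + n, by simp [hm], by simp⟩

end AddSubsemigroup

theorem LinearIndependent.injective_multiset_sum_map {ι M : Type*} [AddCommMonoid M]
    {v : ι → M} (hv : LinearIndependent ℕ v) :
    Injective fun m : Multiset ι => (m.map v).sum := by
  classical
  have h : ∀ m : Multiset ι,
      (m.map v).sum = Finsupp.linearCombination ℕ v (Multiset.toFinsupp m) := by
    intro m
    induction m using Multiset.induction_on with
    | empty => simp
    | cons a m ih => rw [← Multiset.singleton_add, Multiset.toFinsupp_add]; simp [ih]
  intro m n hmn
  exact Multiset.toFinsupp.injective (hv (by simpa only [h] using hmn))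

theorem closure_fixed_union_sum_subset_fixed_inter_closure {Λ : Type*} [AddCommMonoid Λ]
    {θ : Λ →+ Λ} {Δ : Set Λ} (hθ : ∀ l, θ (θ l) = l) (hθΔ : Set.MapsTo θ Δ Δ) :
    (AddSubsemigroup.closure ({α ∈ Δ | θ α = α} ∪ (fun l => l + θ l) '' Δ) : Set Λ) ⊆
      {l | θ l = l} ∩ AddSubsemigroup.closure Δ := by
  have hle : AddSubsemigroup.closure ({α ∈ Δ | θ α = α} ∪ (fun l => l + θ l) '' Δ) ≤
      (θ.eqLocusM (AddMonoidHom.id Λ)).toAddSubsemigroup ⊓ AddSubsemigroup.closure Δ := by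
    rw [AddSubsemigroup.closure_le]
    rintro _ (⟨ha, hfix⟩ | ⟨a, ha, rfl⟩)
    · exact ⟨hfix, AddSubsemigroup.subset_closure ha⟩
    · exact ⟨by simp [AddMonoidHom.eqLocusM, hθ, add_comm],
        add_mem (AddSubsemigroup.subset_closure ha) (AddSubsemigroup.subset_closure (hθΔ ha))⟩
  exact hle

theorem fixed_inter_closure_subset_closure_fixed_union_sum {Λ : Type*} [AddCommGroup Λ]
    {θ : Λ →+ Λ} {Δ : Set Λ} (hθ : ∀ l, θ (θ l) = l) (hθΔ : Set.MapsTo θ Δ Δ)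
    (hind : LinearIndependent ℤ (fun a : Δ => (a : Λ))) :
    {l | θ l = l} ∩ (AddSubsemigroup.closure Δ : Set Λ) ⊆
      AddSubsemigroup.closure ({α ∈ Δ | θ α = α} ∪ (fun l => l + θ l) '' Δ) := by
  let e : Δ → Δ := fun a => ⟨θ a, hθΔ a.2⟩
  have he : Involutive e := fun a => Subtype.ext (hθ a)
  rintro x ⟨hθx, hx⟩
  rw [← Subtype.range_coe (s := Δ)] at hx
  obtain ⟨m, hm0, rfl⟩ := AddSubsemigroup.exists_multiset_of_mem_closure_range hx
  have hme : m.map e = m := (hind.restrict_scalars' ℕ).injective_multiset_sum_map <| by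
    simpa only [Multiset.map_map, comp_apply, Set.mem_ofPred_eq, map_multiset_sum, e] using hθx
  obtain ⟨p, q, hp, rfl⟩ := m.exists_eq_add_add_map_of_map_eq he hme
  have hsum : ((p + q + q.map e).map Subtype.val).sum
      = (p.map Subtype.val + q.map (fun a : Δ => (a : Λ) + θ a)).sum := by
    simp only [Multiset.map_add, Multiset.map_map, comp_apply, Multiset.sum_add,
      Multiset.sum_map_add, e]
    abel
  rw [hsum]
  refine AddSubsemigroup.multiset_sum_mem_closure (by simpa using hm0) ?_
  simp only [Multiset.mem_add, Multiset.mem_map]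
  rintro _ (⟨a, ha, rfl⟩ | ⟨a, -, rfl⟩)
  · exact Or.inl ⟨a.2, congrArg Subtype.val (hp a ha)⟩
  · exact Or.inr ⟨a, a.2, rfl⟩

theorem stmt4_general (Λ : Type*) [AddCommGroup Λ]
    (θ : Λ →+ Λ) (hθ : ∀ l, θ (θ l) = l)
    (Δ : Set Λ) (hθΔ : θ '' Δ = Δ)
    (hind : LinearIndependent ℤ (fun a : Δ => (a : Λ)))
    (σ : Λ → Λ) (hσ : ∀ l, σ l = l + θ l) :
    {l : Λ | θ l = l} ∩ (AddSubsemigroup.closure Δ : Set Λ) =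
      (AddSubsemigroup.closure ({α ∈ Δ | θ α = α} ∪ σ '' Δ) : Set Λ) := by
  obtain rfl : σ = fun l => l + θ l := funext hσ
  have hθΔ' : Set.MapsTo θ Δ Δ := Set.mapsTo_iff_image_subset.mpr hθΔ.subset
  exact (fixed_inter_closure_subset_closure_fixed_union_sum hθ hθΔ' hind).antisymm
    (closure_fixed_union_sum_subset_fixed_inter_closure hθ hθΔ')

/-- Let `Δ ⊂ Λ` be a finite linearly independent set permuted by the
involution `θ`, `Qpos` the sub-semigroup generated by `Δ`, and `σ λ = λ + θ λ`.
Then the semigroup `Λ^θ ∩ Qpos` is generated by the elements `α ∈ Λ^θ ∩ Δ`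
together with the elements `σ α` for `α ∈ Δ`. -/
theorem stmt4 (Λ : Type*) [AddCommGroup Λ] [Module.Free ℤ Λ] [Module.Finite ℤ Λ]
    (θ : Λ →+ Λ) (hθ : ∀ l, θ (θ l) = l)
    (Δ : Set Λ) (hΔfin : Δ.Finite) (hθΔ : θ '' Δ = Δ)
    (hind : LinearIndependent ℤ (fun a : Δ => (a : Λ)))
    (σ : Λ → Λ) (hσ : ∀ l, σ l = l + θ l) :
    {l : Λ | θ l = l} ∩ (AddSubsemigroup.closure Δ : Set Λ) =
      (AddSubsemigroup.closure ({α ∈ Δ | θ α = α} ∪ σ '' Δ) : Set Λ) :=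
  stmt4_general Λ θ hθ Δ hθΔ hind σ hσ
end

section
/- Let B, B′ be coalgebras over a field K, f : B → B′ a coalgebra homomorphism inducing the corestriction functor φ^f : Comod_B → Comod_{B′} (which sends a comodule (X, a_X) to (X, (1 ⊗ f) ∘ a_X)). Given coalgebra maps u : B ⊗ B → B and u′ : B′ ⊗ B′ → B′ inducing tensor-product functors φ^u, φ^{u′} on comodule categories, one has f ∘ u = u′ ∘ (f ⊗ f) if and only if for all comodules X, Y the identity map of X ⊗ Y is a morphism of B′-comodules from φ^f(φ^u(X, Y)) to φ^{u′}(φ^f X, φ^f Y). -/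
open TensorProduct

/-- The coaction on `X ⊗ Y` induced by coactions `aX, aY` and a map
`u : B ⊗ B → B`: `(1 ⊗ u) ∘ (middle interchange) ∘ (aX ⊗ aY)`. -/
noncomputable def tensorCoaction (K : Type) [Field K] {X Y B : Type}
    [AddCommGroup X] [Module K X] [AddCommGroup Y] [Module K Y]
    [AddCommGroup B] [Module K B]
    (u : B ⊗[K] B →ₗ[K] B) (aX : X →ₗ[K] X ⊗[K] B) (aY : Y →ₗ[K] Y ⊗[K] B) :
    (X ⊗[K] Y) →ₗ[K] (X ⊗[K] Y) ⊗[K] B :=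
  (TensorProduct.map LinearMap.id u) ∘ₗ
    (TensorProduct.tensorTensorTensorComm K X B Y B).toLinearMap ∘ₗ
    TensorProduct.map aX aY

section Aux

set_option linter.unusedSectionVars false

variable (K : Type) [Field K]

/-- naturality of the middle-interchange -/
theorem Stmt9Aux.ttt_natural {A₁ A₂ B₁ B₂ C₁ C₂ D₁ D₂ : Type}
    [AddCommGroup A₁] [Module K A₁] [AddCommGroup A₂] [Module K A₂]
    [AddCommGroup B₁] [Module K B₁] [AddCommGroup B₂] [Module K B₂]
    [AddCommGroup C₁] [Module K C₁] [AddCommGroup C₂] [Module K C₂]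
    [AddCommGroup D₁] [Module K D₁] [AddCommGroup D₂] [Module K D₂]
    (p : A₁ →ₗ[K] A₂) (q : B₁ →ₗ[K] B₂) (r : C₁ →ₗ[K] C₂) (s : D₁ →ₗ[K] D₂) :
    (tensorTensorTensorComm K A₂ B₂ C₂ D₂).toLinearMap ∘ₗ
        TensorProduct.map (TensorProduct.map p q) (TensorProduct.map r s)
      = TensorProduct.map (TensorProduct.map p r) (TensorProduct.map q s) ∘ₗ
        (tensorTensorTensorComm K A₁ B₁ C₁ D₁).toLinearMap := by
  ext a b c d
  simp [tensorTensorTensorComm]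

variable {X Y B B' : Type}
    [AddCommGroup X] [Module K X] [AddCommGroup Y] [Module K Y]
    [AddCommGroup B] [Module K B] [AddCommGroup B'] [Module K B']

/-- first normal form -/
theorem Stmt9Aux.normal1 (f : B →ₗ[K] B') (u : B ⊗[K] B →ₗ[K] B)
    (aX : X →ₗ[K] X ⊗[K] B) (aY : Y →ₗ[K] Y ⊗[K] B) :
    (TensorProduct.map LinearMap.id f) ∘ₗ tensorCoaction K u aX aY
      = TensorProduct.map LinearMap.id (f ∘ₗ u) ∘ₗ
          (tensorTensorTensorComm K X B Y B).toLinearMap ∘ₗ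
          TensorProduct.map aX aY := by
  unfold tensorCoaction
  simp only [← LinearMap.comp_assoc]
  rw [← TensorProduct.map_comp, LinearMap.id_comp]

/-- second normal form -/
theorem Stmt9Aux.normal2 (f : B →ₗ[K] B') (u' : B' ⊗[K] B' →ₗ[K] B')
    (aX : X →ₗ[K] X ⊗[K] B) (aY : Y →ₗ[K] Y ⊗[K] B) :
    tensorCoaction K u' ((TensorProduct.map LinearMap.id f) ∘ₗ aX)
        ((TensorProduct.map LinearMap.id f) ∘ₗ aY)
      = TensorProduct.map LinearMap.id (u' ∘ₗ TensorProduct.map f f) ∘ₗ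
          (tensorTensorTensorComm K X B Y B).toLinearMap ∘ₗ
          TensorProduct.map aX aY := by
  unfold tensorCoaction
  rw [TensorProduct.map_comp]
  have e3 := Stmt9Aux.ttt_natural K (LinearMap.id : X →ₗ[K] X) f
    (LinearMap.id : Y →ₗ[K] Y) f
  simp only [← LinearMap.comp_assoc]
  rw [LinearMap.comp_assoc (TensorProduct.map (TensorProduct.map LinearMap.id f)
        (TensorProduct.map LinearMap.id f))
      (tensorTensorTensorComm K X B' Y B').toLinearMap
      (TensorProduct.map LinearMap.id u'), e3, ← LinearMap.comp_assoc,
    ← TensorProduct.map_comp]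
  simp only [TensorProduct.map_id, LinearMap.id_comp, LinearMap.comp_id]

end Aux

section Extraction

variable (K : Type) [Field K]
  (B B' : Type) [AddCommGroup B] [Module K B] [Coalgebra K B]
  [AddCommGroup B'] [Module K B']

noncomputable def Stmt9Aux.eps2 : B ⊗[K] B →ₗ[K] K :=
  (TensorProduct.lid K K).toLinearMap ∘ₗ
    TensorProduct.map (Coalgebra.counit (R := K)) (Coalgebra.counit (R := K))

theorem Stmt9Aux.extraction (g g' : B ⊗[K] B →ₗ[K] B')
    (h : TensorProduct.map (LinearMap.id (M := B ⊗[K] B)) g ∘ₗ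
          (tensorTensorTensorComm K B B B B).toLinearMap ∘ₗ
          TensorProduct.map (Coalgebra.comul (R := K)) (Coalgebra.comul (R := K))
        = TensorProduct.map LinearMap.id g' ∘ₗ
          (tensorTensorTensorComm K B B B B).toLinearMap ∘ₗ
          TensorProduct.map Coalgebra.comul Coalgebra.comul) : g = g' := by
  set εε := Stmt9Aux.eps2 K B with hee
  set h0 : B ⊗[K] B →ₗ[K] B :=
    (TensorProduct.lid K B).toLinearMap ∘ₗ
      (Coalgebra.counit (R := K)).rTensor B with hh0
  have key1 : ∀ (g : B ⊗[K] B →ₗ[K] B'),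
      (TensorProduct.lid K B').toLinearMap ∘ₗ εε.rTensor B' ∘ₗ
        TensorProduct.map (LinearMap.id (M := B ⊗[K] B)) g
      = g ∘ₗ (TensorProduct.lid K (B ⊗[K] B)).toLinearMap ∘ₗ
          εε.rTensor (B ⊗[K] B) := by
    intro g; ext a b c d
    simp [Stmt9Aux.eps2]
  have key2 : (TensorProduct.lid K (B ⊗[K] B)).toLinearMap ∘ₗ
      εε.rTensor (B ⊗[K] B) ∘ₗ (tensorTensorTensorComm K B B B B).toLinearMap
      = TensorProduct.map h0 h0 := by
    ext a b c d
    simp only [LinearMap.coe_comp, Function.comp_apply, AlgebraTensorModule.curry_apply,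
      curry_apply, LinearMap.coe_restrictScalars, LinearEquiv.coe_coe,
      tensorTensorTensorComm_tmul, LinearMap.rTensor_tmul, TensorProduct.map_tmul,
      TensorProduct.lid_tmul, Stmt9Aux.eps2, TensorProduct.smul_tmul',
      TensorProduct.smul_tmul, mul_smul, LinearEquiv.coe_toLinearMap]
    simp [hh0, hee, Stmt9Aux.eps2, TensorProduct.smul_tmul, mul_smul]
    rw [smul_comm]
  have key3 : h0 ∘ₗ (Coalgebra.comul (R := K) (A := B)) = LinearMap.id := by
    ext a
    show h0 (Coalgebra.comul a) = a
    rw [hh0]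
    simp
  have key4 : (TensorProduct.lid K (B ⊗[K] B)).toLinearMap ∘ₗ
        εε.rTensor (B ⊗[K] B) ∘ₗ (tensorTensorTensorComm K B B B B).toLinearMap ∘ₗ
        TensorProduct.map (Coalgebra.comul (R := K)) (Coalgebra.comul (R := K))
      = LinearMap.id := by
    have k2' := key2
    simp only [← LinearMap.comp_assoc] at k2' ⊢
    rw [k2', ← TensorProduct.map_comp, key3, TensorProduct.map_id]
  calc g = g ∘ₗ LinearMap.id := rfl
    _ = g' ∘ₗ LinearMap.id := by
        rw [← key4]
        have e1 := congrArg (fun m => (TensorProduct.lid K B').toLinearMap ∘ₗ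
          εε.rTensor B' ∘ₗ m) h
        have k1g := key1 g
        have k1g' := key1 g'
        simp only [← LinearMap.comp_assoc] at e1 k1g k1g' ⊢
        rw [← k1g, ← k1g']
        exact e1
    _ = g' := rfl

end Extraction

/-- For coalgebras `B, B'` over a field `K`, a coalgebra map
`f : B → B'`, and coalgebra maps `u : B ⊗ B → B`, `u' : B' ⊗ B' → B'`, one has
`f ∘ u = u' ∘ (f ⊗ f)` if and only if for every pair of `B`-comodules `X, Y`
the identity of `X ⊗ Y` is a morphism of `B'`-comodules from
`φ^f(φ^u(X, Y))` to `φ^{u'}(φ^f X, φ^f Y)`, i.e. the two coactions on `X ⊗ Y`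
agree. -/
theorem stmt9 (K : Type) [Field K]
    (B B' : Type) [AddCommGroup B] [Module K B] [Coalgebra K B]
    [AddCommGroup B'] [Module K B'] [Coalgebra K B']
    (f : B →ₗc[K] B') (u : B ⊗[K] B →ₗc[K] B) (u' : B' ⊗[K] B' →ₗc[K] B') :
    (f.toLinearMap ∘ₗ u.toLinearMap
        = u'.toLinearMap ∘ₗ TensorProduct.map f.toLinearMap f.toLinearMap) ↔
      (∀ (X Y : Type) (_ : AddCommGroup X) (_ : Module K X)
          (_ : AddCommGroup Y) (_ : Module K Y)
          (aX : X →ₗ[K] X ⊗[K] B) (aY : Y →ₗ[K] Y ⊗[K] B),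
        -- comodule axioms for `X`
        ((TensorProduct.assoc K X B B).toLinearMap ∘ₗ
            (TensorProduct.map aX LinearMap.id) ∘ₗ aX
          = (TensorProduct.map LinearMap.id (Coalgebra.comul (R := K))) ∘ₗ aX) →
        ((TensorProduct.rid K X).toLinearMap ∘ₗ
            (TensorProduct.map LinearMap.id (Coalgebra.counit (R := K))) ∘ₗ aX
          = LinearMap.id) →
        -- comodule axioms for `Y`
        ((TensorProduct.assoc K Y B B).toLinearMap ∘ₗ
            (TensorProduct.map aY LinearMap.id) ∘ₗ aY
          = (TensorProduct.map LinearMap.id (Coalgebra.comul (R := K))) ∘ₗ aY) →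
        ((TensorProduct.rid K Y).toLinearMap ∘ₗ
            (TensorProduct.map LinearMap.id (Coalgebra.counit (R := K))) ∘ₗ aY
          = LinearMap.id) →
        -- the two coactions on `X ⊗ Y` agree
        (TensorProduct.map LinearMap.id f.toLinearMap) ∘ₗ
            tensorCoaction K u.toLinearMap aX aY
          = tensorCoaction K u'.toLinearMap
              ((TensorProduct.map LinearMap.id f.toLinearMap) ∘ₗ aX)
              ((TensorProduct.map LinearMap.id f.toLinearMap) ∘ₗ aY)) := by
  constructor
  · intro h X Y _ _ _ _ aX aY _ _ _ _
    rw [Stmt9Aux.normal1, Stmt9Aux.normal2, h]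
  · intro h
    have hco : (TensorProduct.assoc K B B B).toLinearMap ∘ₗ
        (TensorProduct.map (Coalgebra.comul (R := K)) LinearMap.id) ∘ₗ
        (Coalgebra.comul (R := K))
        = (TensorProduct.map LinearMap.id (Coalgebra.comul (R := K))) ∘ₗ
          (Coalgebra.comul (R := K) (A := B)) := by
      have := Coalgebra.coassoc (R := K) (A := B)
      exact this
    have hcu : (TensorProduct.rid K B).toLinearMap ∘ₗ
        (TensorProduct.map LinearMap.id (Coalgebra.counit (R := K))) ∘ₗ
        (Coalgebra.comul (R := K) (A := B)) = LinearMap.id := by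
      ext a
      have : (TensorProduct.map (LinearMap.id (M := B))
          (Coalgebra.counit (R := K))) (Coalgebra.comul a)
          = (Coalgebra.counit (R := K)).lTensor B (Coalgebra.comul a) := rfl
      simp [this]
    have h2 := h B B inferInstance inferInstance inferInstance inferInstance
      (Coalgebra.comul (R := K)) (Coalgebra.comul (R := K)) hco hcu hco hcu
    rw [Stmt9Aux.normal1, Stmt9Aux.normal2] at h2
    exact Stmt9Aux.extraction K B B' _ _ h2
end

section
/- Let C be a K-linear abelian category with an exact faithful K-linear functor ω : C → Vect_K. For X ∈ C let ⟨X⟩ be the full subcategory of subquotients of finite direct sums X^{⊕n}. Then ω restricted to ⟨X⟩ does not vanish on any nonzero object; consequently, if a natural endomorphism η of ω|⟨X⟩ vanishes on X, then η vanishes on every object of ⟨X⟩. -/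
open CategoryTheory CategoryTheory.Limits

/-- Let `C` be a `K`-linear abelian category with an exact faithful
`K`-linear functor `ω : C → Vect_K`, and for `X ∈ C` let `⟨X⟩` be the objects
which are subquotients of finite direct sums `X^{⊕n}`.  Then `ω` does not vanish
on any nonzero object of `⟨X⟩`, and any natural endomorphism of `ω|⟨X⟩`
vanishing on `X` vanishes on every object of `⟨X⟩`. -/
theorem stmt15 (K : Type) [Field K] (C : Type) [Category C] [Abelian C]
    [Linear K C]
    (ω : C ⥤ ModuleCat K) [ω.Additive] [Functor.Linear K ω] [ω.Faithful]
    [HasFiniteBiproducts C] [PreservesFiniteLimits ω] [PreservesFiniteColimits ω]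
    (X : C) (P : C → Prop)
    (hP : ∀ Y : C, P Y ↔ ∃ (n : ℕ) (A : C) (i : A ⟶ ⨁ fun _ : Fin n => X)
        (p : A ⟶ Y), Mono i ∧ Epi p) :
    (∀ Y : C, P Y → ¬ IsZero Y → ¬ IsZero (ω.obj Y)) ∧
    (∀ η : ∀ Y : C, P Y → (ω.obj Y ⟶ ω.obj Y),
      (∀ (Y Z : C) (hY : P Y) (hZ : P Z) (f : Y ⟶ Z),
        ω.map f ≫ η Z hZ = η Y hY ≫ ω.map f) →
      ∀ hX : P X, η X hX = 0 → ∀ (Y : C) (hY : P Y), η Y hY = 0) := by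
  constructor
  · intro Y _ hY hz
    apply hY
    rw [IsZero.iff_id_eq_zero]
    apply ω.map_injective
    rw [ω.map_id, ω.map_zero]
    exact hz.eq_of_src _ _
  · intro η hnat hX hηX Y hY
    obtain ⟨n, A, i, p, hi, hp⟩ := (hP Y).1 hY
    have hPA : P A := (hP A).2 ⟨n, A, i, 𝟙 A, hi, inferInstance⟩
    have hPB : P (⨁ fun _ : Fin n => X) :=
      (hP _).2 ⟨n, _, 𝟙 _, 𝟙 _, inferInstance, inferInstance⟩
    -- η vanishes on the biproduct
    have hηB : η _ hPB = 0 := by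
      have hjm : ∀ j : Fin n,
          η _ hPB ≫ ω.map (biproduct.π (fun _ : Fin n => X) j) = 0 := by
        intro j
        have := hnat _ X hPB hX (biproduct.π (fun _ : Fin n => X) j)
        rw [hηX, comp_zero] at this
        exact this.symm
      have hmono : Mono (ω.mapBiproduct (fun _ : Fin n => X)).hom :=
        inferInstance
      rw [← cancel_mono (ω.mapBiproduct (fun _ : Fin n => X)).hom]
      rw [zero_comp, Functor.mapBiproduct_hom]
      apply biproduct.hom_ext
      intro j
      rw [Category.assoc]
      erw [biproduct.lift_π]
      rw [zero_comp]
      exact hjm j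
    have hηA : η A hPA = 0 := by
      have hmono : Mono (ω.map i) := ω.map_mono i
      rw [← cancel_mono (ω.map i)]
      have := hnat A _ hPA hPB i
      rw [hηB, comp_zero] at this
      rw [zero_comp, ← this]
    have hepi : Epi (ω.map p) := ω.map_epi p
    rw [← cancel_epi (ω.map p)]
    have := hnat A Y hPA hY p
    rw [hηA, zero_comp] at this
    rw [comp_zero, this]
end
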